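/- For θ ∈ (0,1), ρ > 0, define the generalized Hill potential F_{θ,ρ}(x,y) = (θ(1-θ)ρ²)^{-1} ( 1/|x| - (1-θ)/|x - θρy| - θ/|x + (1-θ)ρy| ) on the region |x| > ρ|y|. Then F_{θ,ρ} extends to an analytic (in particular continuous) function of (x, y, θ, ρ) on the region {|x| > |ρ y|, 0 ≤ θ ≤ 1}, and its value at ρ = 0 equals the Hill potential: F_{θ,0}(x,y) = F(x,y) = (|x|²|y|² - 3⟨x,y⟩²)/(2|x|⁵). -/

import Mathlib

/-- The Hill potential `F(x,y) = (|x|²|y|² - 3⟨x,y⟩²)/(2|x|⁵)`. -/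
noncomputable def hillF (x y : EuclideanSpace ℝ (Fin 2)) : ℝ :=
  (‖x‖ ^ 2 * ‖y‖ ^ 2 - 3 * (inner ℝ x y : ℝ) ^ 2) / (2 * ‖x‖ ^ 5)

/-!
Rationalising `1/a - 1/b = (b² - a²)/(a b (a + b))` for `a = ‖x‖`, `b = ‖x - θρ y‖` exposes the
factor `θρ` in `b² - a² = θρ (θρ ‖y‖² - 2⟪x, y⟫)`; likewise `c² - a²` carries the factor `(1-θ)ρ`
for `c = ‖x + (1-θ)ρ y‖`, and one more rationalisation, of `b - c`, produces the last factor `ρ`.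
After cancelling `(θ(1-θ)ρ²)⁻¹` what remains is a rational function whose denominator involves
only `a, b, c`, the norms of vectors that do not vanish on the region. It is therefore analytic
there, and at `ρ = 0`, where `a = b = c`, it is the Hill potential.
-/

open Set
open scoped ContDiff RealInnerProductSpace

noncomputable section

theorem one_div_sub_one_div_eq_sq_sub_sq {a b : ℝ} (ha : 0 < a) (hb : 0 < b) :
    1 / a - 1 / b = (b ^ 2 - a ^ 2) / (a * b * (a + b)) := by
  field_simp
  ring

def hillRat (a b c q w θ ρ : ℝ) : ℝ :=
  w * (θ / (a * b * (a + b)) + (1 - θ) / (a * c * (a + c))) +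
    2 * q * (ρ * w * (2 * θ - 1) - 2 * q) * (a + b + c) /
      (a * b * c * (a + b) * (a + c) * (b + c))

theorem hillRat_eq {a b c q w θ ρ : ℝ} (ha : 0 < a) (hb : 0 < b) (hc : 0 < c)
    (hθ : θ ≠ 0) (hθ' : 1 - θ ≠ 0) (hρ : ρ ≠ 0)
    (hb2 : b ^ 2 = a ^ 2 - 2 * θ * ρ * q + θ ^ 2 * ρ ^ 2 * w)
    (hc2 : c ^ 2 = a ^ 2 + 2 * (1 - θ) * ρ * q + (1 - θ) ^ 2 * ρ ^ 2 * w) :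
    hillRat a b c q w θ ρ = (θ * (1 - θ) * ρ ^ 2)⁻¹ * (1 / a - (1 - θ) / b - θ / c) := by
  have hab : 1 / a - 1 / b = θ * ρ * (θ * ρ * w - 2 * q) / (a * b * (a + b)) := by
    rw [one_div_sub_one_div_eq_sq_sub_sq ha hb, hb2]
    ring
  have hac : 1 / a - 1 / c = (1 - θ) * ρ * ((1 - θ) * ρ * w + 2 * q) / (a * c * (a + c)) := by
    rw [one_div_sub_one_div_eq_sq_sub_sq ha hc, hc2]
    ring
  have hbc : 1 / (a * c * (a + c)) - 1 / (a * b * (a + b)) =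
      ρ * (ρ * w * (2 * θ - 1) - 2 * q) * (a + b + c) /
        (a * b * c * (a + b) * (a + c) * (b + c)) := by
    have hb2c2 : b ^ 2 - c ^ 2 = ρ * (ρ * w * (2 * θ - 1) - 2 * q) := by
      rw [hb2, hc2]
      ring
    rw [← hb2c2]
    field_simp
    ring
  calc hillRat a b c q w θ ρ
      = w * (θ / (a * b * (a + b)) + (1 - θ) / (a * c * (a + c))) +
          2 * q / ρ * (1 / (a * c * (a + c)) - 1 / (a * b * (a + b))) := by
        rw [hillRat, hbc]
        field_simp
    _ = (θ * (1 - θ) * ρ ^ 2)⁻¹ * ((1 - θ) * (1 / a - 1 / b) + θ * (1 / a - 1 / c)) := by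
        rw [hab, hac]
        field_simp
        ring
    _ = (θ * (1 - θ) * ρ ^ 2)⁻¹ * (1 / a - (1 - θ) / b - θ / c) := by ring

theorem hillRat_self_zero {a : ℝ} (ha : a ≠ 0) (q w θ : ℝ) :
    hillRat a a a q w θ 0 = (a ^ 2 * w - 3 * q ^ 2) / (2 * a ^ 5) := by
  rw [hillRat]
  field_simp
  ring

variable {E : Type*} [NormedAddCommGroup E] [InnerProductSpace ℝ E]

def hillExt (x y : E) (θ ρ : ℝ) : ℝ :=
  hillRat ‖x‖ ‖x - (θ * ρ) • y‖ ‖x + ((1 - θ) * ρ) • y‖ ⟪x, y⟫ (‖y‖ ^ 2) θ ρ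

def hillDomain (E : Type*) [NormedAddCommGroup E] : Set (E × E × ℝ × ℝ) :=
  {p | |p.2.2.2| * ‖p.2.1‖ < ‖p.1‖ ∧ p.2.2.1 ∈ Icc (0 : ℝ) 1}

theorem norm_smul_mul_lt {x y : E} {t ρ : ℝ} (ht : |t| ≤ 1) (h : |ρ| * ‖y‖ < ‖x‖) :
    ‖(t * ρ) • y‖ < ‖x‖ := by
  rw [norm_smul, Real.norm_eq_abs, abs_mul, mul_assoc]
  exact (mul_le_of_le_one_left (by positivity) ht).trans_lt h

theorem hill_vectors_ne_zero {x y : E} {θ ρ : ℝ} (h : |ρ| * ‖y‖ < ‖x‖) (hθ : θ ∈ Icc (0 : ℝ) 1) :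
    x ≠ 0 ∧ x - (θ * ρ) • y ≠ 0 ∧ x + ((1 - θ) * ρ) • y ≠ 0 := by
  have hb := norm_smul_mul_lt (abs_le.2 ⟨by linarith [hθ.1], hθ.2⟩) h
  have hc := norm_smul_mul_lt (t := 1 - θ) (abs_le.2 ⟨by linarith [hθ.2], by linarith [hθ.1]⟩) h
  refine ⟨norm_pos_iff.1 ((norm_nonneg _).trans_lt hb), norm_pos_iff.1 ?_, norm_pos_iff.1 ?_⟩
  · linarith [norm_sub_norm_le x ((θ * ρ) • y)]
  · linarith [norm_sub_le_norm_add x (((1 - θ) * ρ) • y)]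

theorem hillExt_eq {x y : E} {θ ρ : ℝ} (hx : x ≠ 0) (hb : x - (θ * ρ) • y ≠ 0)
    (hc : x + ((1 - θ) * ρ) • y ≠ 0) (hθ : θ ≠ 0) (hθ' : 1 - θ ≠ 0) (hρ : ρ ≠ 0) :
    hillExt x y θ ρ = (θ * (1 - θ) * ρ ^ 2)⁻¹ *
      (1 / ‖x‖ - (1 - θ) / ‖x - (θ * ρ) • y‖ - θ / ‖x + ((1 - θ) * ρ) • y‖) := by
  refine hillRat_eq (norm_pos_iff.2 hx) (norm_pos_iff.2 hb) (norm_pos_iff.2 hc) hθ hθ' hρ ?_ ?_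
  · rw [norm_sub_sq_real, real_inner_smul_right, norm_smul, mul_pow, Real.norm_eq_abs, sq_abs]
    ring
  · rw [norm_add_sq_real, real_inner_smul_right, norm_smul, mul_pow, Real.norm_eq_abs, sq_abs]
    ring

theorem hillExt_zero {x : E} (hx : x ≠ 0) (y : E) (θ : ℝ) :
    hillExt x y θ 0 = (‖x‖ ^ 2 * ‖y‖ ^ 2 - 3 * ⟪x, y⟫ ^ 2) / (2 * ‖x‖ ^ 5) := by
  simpa only [hillExt, mul_zero, zero_smul, sub_zero, add_zero]
    using hillRat_self_zero (norm_ne_zero_iff.2 hx) ⟪x, y⟫ (‖y‖ ^ 2) θ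

theorem contDiffAt_hillExt {p : E × E × ℝ × ℝ} (hx : p.1 ≠ 0)
    (hb : p.1 - (p.2.2.1 * p.2.2.2) • p.2.1 ≠ 0) (hc : p.1 + ((1 - p.2.2.1) * p.2.2.2) • p.2.1 ≠ 0) :
    ContDiffAt ℝ ω (fun p : E × E × ℝ × ℝ => hillExt p.1 p.2.1 p.2.2.1 p.2.2.2) p := by
  have hA : ContDiffAt ℝ ω (fun p : E × E × ℝ × ℝ => ‖p.1‖) p := contDiffAt_fst.norm ℝ hx
  have hB : ContDiffAt ℝ ω (fun p : E × E × ℝ × ℝ => ‖p.1 - (p.2.2.1 * p.2.2.2) • p.2.1‖) p :=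
    ContDiffAt.norm ℝ (by fun_prop) hb
  have hC : ContDiffAt ℝ ω
      (fun p : E × E × ℝ × ℝ => ‖p.1 + ((1 - p.2.2.1) * p.2.2.2) • p.2.1‖) p :=
    ContDiffAt.norm ℝ (by fun_prop) hc
  have hQ : ContDiffAt ℝ ω (fun p : E × E × ℝ × ℝ => ⟪p.1, p.2.1⟫) p :=
    contDiffAt_fst.inner ℝ (contDiffAt_fst.comp p contDiffAt_snd)
  have hW : ContDiffAt ℝ ω (fun p : E × E × ℝ × ℝ => ‖p.2.1‖ ^ 2) p :=
    (contDiffAt_fst.comp p contDiffAt_snd).norm_sq ℝ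
  have ha := norm_pos_iff.2 hx
  have hb' := norm_pos_iff.2 hb
  have hc' := norm_pos_iff.2 hc
  unfold hillExt hillRat
  fun_prop (disch := positivity)

theorem analyticOnNhd_hillExt :
    AnalyticOnNhd ℝ (fun p : E × E × ℝ × ℝ => hillExt p.1 p.2.1 p.2.2.1 p.2.2.2)
      (hillDomain E) := by
  rintro p ⟨hlt, hθ⟩
  obtain ⟨hx, hb, hc⟩ := hill_vectors_ne_zero hlt hθ
  exact (contDiffAt_hillExt hx hb hc).analyticAt

end

/-- The generalized Hill potential
`F_{θ,ρ}(x,y) = (θ(1-θ)ρ²)⁻¹ (1/|x| - (1-θ)/|x-θρy| - θ/|x+(1-θ)ρy|)`, a priori defined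
for `θ ∈ (0,1)`, `ρ > 0`, `|x| > ρ|y|`, extends to a function `G` of `(x, y, θ, ρ)` that
is analytic (in particular continuous) on the region `{|x| > |ρ| |y|, 0 ≤ θ ≤ 1}`, and
whose value at `ρ = 0` equals the Hill potential `F(x,y)`. -/
theorem stmt12 :
    ∃ G : EuclideanSpace ℝ (Fin 2) × EuclideanSpace ℝ (Fin 2) × ℝ × ℝ → ℝ,
      AnalyticOn ℝ G
        {p | |p.2.2.2| * ‖p.2.1‖ < ‖p.1‖ ∧ p.2.2.1 ∈ Set.Icc (0 : ℝ) 1} ∧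
      ContinuousOn G
        {p | |p.2.2.2| * ‖p.2.1‖ < ‖p.1‖ ∧ p.2.2.1 ∈ Set.Icc (0 : ℝ) 1} ∧
      (∀ (x y : EuclideanSpace ℝ (Fin 2)) (θ ρ : ℝ),
        θ ∈ Set.Ioo (0 : ℝ) 1 → 0 < ρ → ρ * ‖y‖ < ‖x‖ →
        G (x, y, θ, ρ) = (θ * (1 - θ) * ρ ^ 2)⁻¹ *
          (1 / ‖x‖ - (1 - θ) / ‖x - (θ * ρ) • y‖ - θ / ‖x + ((1 - θ) * ρ) • y‖)) ∧
      (∀ (x y : EuclideanSpace ℝ (Fin 2)) (θ : ℝ), x ≠ 0 → θ ∈ Set.Icc (0 : ℝ) 1 →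
        G (x, y, θ, 0) = hillF x y) := by
  have hG := analyticOnNhd_hillExt (E := EuclideanSpace ℝ (Fin 2))
  refine ⟨_, hG.analyticOn, hG.analyticOn.continuousOn, ?_, ?_⟩
  · intro x y θ ρ hθ hρ hlt
    obtain ⟨hx, hb, hc⟩ :=
      hill_vectors_ne_zero (by rwa [abs_of_pos hρ]) (Ioo_subset_Icc_self hθ)
    exact hillExt_eq hx hb hc hθ.1.ne' (sub_ne_zero.2 hθ.2.ne') hρ.ne'
  · intro x y θ hx _
    exact hillExt_zero hx y θ
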